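/- Let H > 0 and q > 4. Let (X,V) : [0,T]×ℝ³×ℝ³ → ℝ³×ℝ³ be a bijective flow at each time with Jacobian e^{3t} (i.e., the change of variables (x,v) ↦ (X(t,x,v), V(t,x,v)) has Jacobian determinant e^{3t}) and suppose |V(t,x,v) − e^{−t}v| ≤ C_0 for all t ∈ [0,T]. Let f^in satisfy (1+|v|^q) f^in(x,v) ≤ H. Define f(t) as the push-forward of f^in by the flow at time t. Then there is a constant C depending only on T, C_0, q such that for all t ∈ [0,T] and x ∈ ℝ³, m_0 f(t)(x) + m_1 f(t)(x) ≤ C·H, where m_k f(t)(x) = ∫ f(t)(x,v)|v|^k dv. -/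
import Mathlib


open MeasureTheory

local notation "𝔼" => EuclideanSpace ℝ (Fin 3)

/-- if `Z(t)` is a bijective flow on phase space with Jacobian `e^{3t}`
(so `Z(t)#λ = e^{−3t} λ`), whose velocity component stays within `C₀` of `e^{−t} v`, and
`f^in ≤ H (1+|v|^q)^{−1}` with `q > 4`, then the moments `m₀ + m₁` of the push-forward
density `f(t) = e^{−3t} f^in ∘ Z(t)⁻¹` are bounded by `C(T,C₀,q) · H`. -/
theorem stmt11 (T C0 q : ℝ) (hT : 0 < T) (hC0 : 0 < C0) (hq : 4 < q) :
    ∃ C : ℝ, 0 < C ∧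
      ∀ (Z : ℝ → (𝔼 × 𝔼) → 𝔼 × 𝔼) (fin : 𝔼 × 𝔼 → ℝ) (H : ℝ), 0 < H →
        (∀ t ∈ Set.Icc (0:ℝ) T, Function.Bijective (Z t)) →
        (∀ t ∈ Set.Icc (0:ℝ) T,
          Measure.map (Z t) volume = ENNReal.ofReal (Real.exp (-3 * t)) • volume) →
        (∀ t ∈ Set.Icc (0:ℝ) T, ∀ z : 𝔼 × 𝔼,
          ‖(Z t z).2 - Real.exp (-t) • z.2‖ ≤ C0) →
        (∀ z : 𝔼 × 𝔼, 0 ≤ fin z) →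
        (∀ z : 𝔼 × 𝔼, (1 + ‖z.2‖ ^ q) * fin z ≤ H) →
        ∀ t ∈ Set.Icc (0:ℝ) T, ∀ x : 𝔼,
          (∫ v : 𝔼, Real.exp (-3 * t) * fin (Function.invFun (Z t) (x, v))) +
            (∫ v : 𝔼, Real.exp (-3 * t) * fin (Function.invFun (Z t) (x, v)) * ‖v‖) ≤
            C * H := by
  have hq0 : (0:ℝ) ≤ q := by linarith
  set K : ℝ := (2*(1+C0))^q with hKdef
  have hK0 : 0 < K := Real.rpow_pos_of_pos (by linarith) q
  have hJint : Integrable (fun v : 𝔼 => (1 + ‖v‖) ^ (-(q-1))) (volume : Measure 𝔼) := by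
    apply integrable_one_add_norm
    simp only [finrank_euclideanSpace, Fintype.card_fin]
    push_cast
    linarith
  set J : ℝ := ∫ v : 𝔼, (1 + ‖v‖) ^ (-(q-1)) with hJdef
  have hJ0 : 0 ≤ J :=
    integral_nonneg fun v => Real.rpow_nonneg (by positivity) _
  refine ⟨2*(K*J)+1, by positivity, ?_⟩
  intro Z fin H hH hbij hmap hdrift hfin0 hfinH t ht x
  have ht0 : 0 ≤ t := ht.1
  have he1 : Real.exp (-3*t) ≤ 1 := Real.exp_le_one_iff.mpr (by linarith)
  have key : ∀ v : 𝔼, fin (Function.invFun (Z t) (x, v)) * (1+‖v‖)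
      ≤ H * K * (1+‖v‖)^(-(q-1)) := by
    intro v
    set w := Function.invFun (Z t) (x, v) with hw
    have hZw : Z t w = (x, v) := Function.invFun_eq ((hbij t ht).2 (x, v))
    have hdr := hdrift t ht w
    rw [hZw] at hdr
    have het : Real.exp (-t) ≤ 1 := Real.exp_le_one_iff.mpr (by linarith)
    have hwv : ‖v‖ - C0 ≤ ‖w.2‖ := by
      have h1 : ‖v‖ - ‖Real.exp (-t) • w.2‖ ≤ C0 := le_trans (norm_sub_norm_le _ _) hdr
      have h2 : ‖Real.exp (-t) • w.2‖ = Real.exp (-t) * ‖w.2‖ := by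
        rw [norm_smul, Real.norm_eq_abs, abs_of_pos (Real.exp_pos _)]
      nlinarith [norm_nonneg w.2, Real.exp_pos (-t)]
    set m : ℝ := max (‖v‖ - C0) 0 with hm
    have hm0 : 0 ≤ m := le_max_right _ _
    have hmw : m ≤ ‖w.2‖ := max_le hwv (norm_nonneg _)
    have hmq : m ^ q ≤ ‖w.2‖ ^ q := Real.rpow_le_rpow hm0 hmw hq0
    have hden : (0:ℝ) < 1 + m ^ q := by positivity
    have hfin1 : fin w ≤ H / (1 + m ^ q) := by
      rw [le_div_iff₀ hden]
      calc fin w * (1 + m ^ q) ≤ fin w * (1 + ‖w.2‖ ^ q) := by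
            have := hfin0 w; nlinarith
        _ = (1 + ‖w.2‖ ^ q) * fin w := by ring
        _ ≤ H := hfinH w
    have hx1 : (1:ℝ) ≤ 1 + ‖v‖ := by have := norm_nonneg v; linarith
    have hxpos : (0:ℝ) < 1 + ‖v‖ := by linarith
    -- core estimate: (1+‖v‖)^q ≤ K * (1 + m^q)
    have stepA : 1 + ‖v‖ ≤ (1+C0) * (1+m) := by
      have h3 : ‖v‖ - C0 ≤ m := le_max_left _ _
      nlinarith
    have stepC : (1+m)^q ≤ 2^q * (1 + m^q) := by
      rcases le_total m 1 with hle | hle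
      · have h4 : (1+m)^q ≤ 2^q := Real.rpow_le_rpow (by linarith) (by linarith) hq0
        have h5 : (0:ℝ) ≤ (2:ℝ)^q := Real.rpow_nonneg (by norm_num) q
        have h6 : (0:ℝ) ≤ m^q := Real.rpow_nonneg hm0 q
        calc (1+m)^q ≤ 2^q := h4
          _ ≤ 2^q * (1 + m^q) := le_mul_of_one_le_right h5 (by linarith)
      · have h4 : (1+m)^q ≤ (2*m)^q := Real.rpow_le_rpow (by linarith) (by linarith) hq0
        have h5 : (2*m)^q = 2^q * m^q := Real.mul_rpow (by norm_num) hm0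
        have h6 : (0:ℝ) ≤ (2:ℝ)^q := Real.rpow_nonneg (by norm_num) q
        have h7 : (0:ℝ) ≤ m^q := Real.rpow_nonneg hm0 q
        calc (1+m)^q ≤ (2*m)^q := h4
          _ = 2^q * m^q := h5
          _ ≤ 2^q * (1 + m^q) := mul_le_mul_of_nonneg_left (by linarith) h6
    have stepB : (1+‖v‖)^q ≤ K * (1 + m^q) := by
      have h7 : (1+‖v‖)^q ≤ ((1+C0)*(1+m))^q :=
        Real.rpow_le_rpow (by linarith) stepA hq0
      have h8 : ((1+C0)*(1+m))^q = (1+C0)^q * (1+m)^q :=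
        Real.mul_rpow (by linarith) (by linarith)
      have h9 : (0:ℝ) ≤ (1+C0)^q := Real.rpow_nonneg (by linarith) q
      have h10 : K = 2^q * (1+C0)^q := by
        rw [hKdef, ← Real.mul_rpow (by norm_num) (by linarith)]
      calc (1+‖v‖)^q ≤ ((1+C0)*(1+m))^q := h7
        _ = (1+C0)^q * (1+m)^q := h8
        _ ≤ (1+C0)^q * (2^q * (1 + m^q)) := mul_le_mul_of_nonneg_left stepC h9
        _ = K * (1 + m^q) := by rw [h10]; ring
    have hfrac : (1+‖v‖) / (1 + m^q) ≤ K * (1+‖v‖)^(-(q-1)) := by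
      have h11 : (1+‖v‖)^(-(q-1)) = (1+‖v‖) * ((1+‖v‖)^q)⁻¹ := by
        rw [show -(q-1) = 1 + (-q) by ring, Real.rpow_add hxpos,
          Real.rpow_one, Real.rpow_neg (le_of_lt hxpos)]
      have hxq : (0:ℝ) < (1+‖v‖)^q := Real.rpow_pos_of_pos hxpos q
      rw [h11, div_le_iff₀ hden]
      rw [show K * ((1+‖v‖) * ((1+‖v‖)^q)⁻¹) * (1 + m^q)
          = (K * (1 + m^q)) * ((1+‖v‖) * ((1+‖v‖)^q)⁻¹) by ring]
      rw [← div_le_iff₀ (by positivity : (0:ℝ) < (1+‖v‖) * ((1+‖v‖)^q)⁻¹)] at *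
      calc (1+‖v‖) / ((1+‖v‖) * ((1+‖v‖)^q)⁻¹) = (1+‖v‖)^q := by
            field_simp
        _ ≤ K * (1 + m^q) := stepB
    calc fin w * (1+‖v‖) ≤ (H / (1 + m^q)) * (1+‖v‖) := by
          apply mul_le_mul_of_nonneg_right hfin1 (le_of_lt hxpos)
      _ = H * ((1+‖v‖) / (1 + m^q)) := by ring
      _ ≤ H * (K * (1+‖v‖)^(-(q-1))) := by
          exact mul_le_mul_of_nonneg_left hfrac (le_of_lt hH)
      _ = H * K * (1+‖v‖)^(-(q-1)) := by ring
  have hI : Integrable (fun v : 𝔼 => H * K * (1+‖v‖)^(-(q-1))) (volume : Measure 𝔼) :=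
    hJint.const_mul (H*K)
  have hIval : (∫ v : 𝔼, H * K * (1+‖v‖)^(-(q-1))) = H * K * J := by
    rw [hJdef, ← integral_const_mul]
  have h0 : (∫ v : 𝔼, Real.exp (-3 * t) * fin (Function.invFun (Z t) (x, v))) ≤ H * K * J := by
    rw [← hIval]
    apply integral_mono_of_nonneg
    · filter_upwards with v
      exact mul_nonneg (le_of_lt (Real.exp_pos _)) (hfin0 _)
    · exact hI
    · filter_upwards with v
      have hk := key v
      have hf := hfin0 (Function.invFun (Z t) (x, v))
      have := norm_nonneg v
      nlinarith [Real.exp_pos (-3*t)]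
  have h1 : (∫ v : 𝔼, Real.exp (-3 * t) * fin (Function.invFun (Z t) (x, v)) * ‖v‖)
      ≤ H * K * J := by
    rw [← hIval]
    apply integral_mono_of_nonneg
    · filter_upwards with v
      exact mul_nonneg (mul_nonneg (le_of_lt (Real.exp_pos _)) (hfin0 _)) (norm_nonneg _)
    · exact hI
    · filter_upwards with v
      have hk := key v
      have hf := hfin0 (Function.invFun (Z t) (x, v))
      have hv := norm_nonneg v
      have h' : Real.exp (-3*t) * fin (Function.invFun (Z t) (x, v))
          ≤ fin (Function.invFun (Z t) (x, v)) := mul_le_of_le_one_left hf he1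
      calc Real.exp (-3*t) * fin (Function.invFun (Z t) (x, v)) * ‖v‖
          ≤ fin (Function.invFun (Z t) (x, v)) * ‖v‖ := mul_le_mul_of_nonneg_right h' hv
        _ ≤ fin (Function.invFun (Z t) (x, v)) * (1 + ‖v‖) :=
            mul_le_mul_of_nonneg_left (by linarith) hf
        _ ≤ H * K * (1+‖v‖)^(-(q-1)) := hk
  nlinarith [mul_nonneg (mul_nonneg hK0.le hJ0) hH.le]
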